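/- Let Γ be the signed graph obtained from a signed cycle C_g^σ by joining one vertex of the cycle to the center of a star K_{1,r} (r ≥ 1) by an edge (with arbitrary signs on the new edges). Then i₋(Γ) = i₋(C_g^σ) + 1 and i₊(Γ) = i₊(C_g^σ) + 1. -/

import Mathlib

/-!
Let `w` be the centre of the star and `u` one of its leaves. Every nonzero entry of the adjacency
matrix `A` lies in the cycle block `S × S` or in the row or column of `w`, and `A w w = 0`, so
`xᵀ A x = x|_Sᵀ B x|_S + 2 x_w (A x)_w`, where `B` is the matrix of the cycle. Since `A w u = ±1`,
the map `x ↦ (x|_S, x_w, (A x)_w)` is onto, so the form of `A` is the pull-back of `B ⊕ 2ab` along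
a surjection. The remaining leaves only enlarge the kernel of that map. The hyperbolic plane `2ab`
has one positive and one negative direction, and by Sylvester's law of inertia both inertia
indices grow by one.
-/

open Matrix

/-- A signed graph: a simple graph together with a `±1` sign on each edge. -/
structure SignedGraph (V : Type*) where
  G : SimpleGraph V
  sign : V → V → ℝ
  sign_symm : ∀ u v, sign u v = sign v u
  sign_pm : ∀ u v, G.Adj u v → sign u v = 1 ∨ sign u v = -1

namespace SignedGraph

variable {V : Type*} [Fintype V] [DecidableEq V]

open scoped Classical

/-- The (signed) adjacency matrix of a signed graph. -/
noncomputable def adjMatrix (Γ : SignedGraph V) : Matrix V V ℝ :=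
  fun u v => if Γ.G.Adj u v then Γ.sign u v else 0

lemma isHermitian (Γ : SignedGraph V) : Γ.adjMatrix.IsHermitian := by
  classical
  ext u v
  simp only [adjMatrix, Matrix.conjTranspose_apply, star_trivial]
  by_cases h : Γ.G.Adj v u
  · simp [h, h.symm, Γ.sign_symm v u]
  · have h' : ¬ Γ.G.Adj u v := fun hh => h hh.symm
    simp [h, h']

/-- number of positive eigenvalues (with multiplicity). -/
noncomputable def posInertia (Γ : SignedGraph V) : ℕ :=
  (Finset.univ.filter fun i => 0 < Γ.isHermitian.eigenvalues i).card

/-- number of negative eigenvalues (with multiplicity). -/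
noncomputable def negInertia (Γ : SignedGraph V) : ℕ :=
  (Finset.univ.filter fun i => Γ.isHermitian.eigenvalues i < 0).card

/-- multiplicity of the eigenvalue zero. -/
noncomputable def nullity (Γ : SignedGraph V) : ℕ :=
  (Finset.univ.filter fun i => Γ.isHermitian.eigenvalues i = 0).card

/-- The sign of an (unordered) edge. -/
def edgeSign (Γ : SignedGraph V) : Sym2 V → ℝ :=
  Sym2.lift ⟨Γ.sign, Γ.sign_symm⟩

/-- A signed graph is balanced if every cycle has positive sign. -/
def Balanced (Γ : SignedGraph V) : Prop :=
  ∀ (v : V) (w : Γ.G.Walk v v), w.IsCycle → (w.edges.map Γ.edgeSign).prod = 1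

/-- Switching equivalence of two signed graphs on the same vertex set. -/
def SwitchingEquiv (Γ₁ Γ₂ : SignedGraph V) : Prop :=
  Γ₁.G = Γ₂.G ∧ ∃ θ : V → ℝ, (∀ v, θ v = 1 ∨ θ v = -1) ∧
    ∀ u v, Γ₁.G.Adj u v → Γ₂.sign u v = θ u * Γ₁.sign u v * θ v

/-- The induced signed subgraph on a finite set of vertices. -/
noncomputable def inducedOn (Γ : SignedGraph V) (s : Finset V) :
    SignedGraph {x // x ∈ s} where
  G := { Adj := fun a b => Γ.G.Adj a b
         symm := ⟨fun a b h => Γ.G.adj_symm h⟩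
         loopless := ⟨fun a h => Γ.G.irrefl h⟩ }
  sign := fun a b => Γ.sign a b
  sign_symm := fun a b => Γ.sign_symm a b
  sign_pm := fun a b h => Γ.sign_pm a b h

end SignedGraph

open Module QuadraticMap
open scoped Finset

theorem Submodule.finrank_prod {E F : Type*} [AddCommGroup E] [Module ℝ E] [AddCommGroup F]
    [Module ℝ F] [FiniteDimensional ℝ E] [FiniteDimensional ℝ F]
    (W : Submodule ℝ E) (W' : Submodule ℝ F) :
    finrank ℝ (W.prod W') = finrank ℝ W + finrank ℝ W' := by
  have hrange : W.prod W' = (W.subtype.prodMap W'.subtype).range := by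
    rw [LinearMap.range_prodMap, W.range_subtype, W'.range_subtype]
  rw [hrange, LinearMap.finrank_range_of_inj (W.injective_subtype.prodMap W'.injective_subtype),
    Module.finrank_prod]

namespace QuadraticMap

variable {E F : Type*} [AddCommGroup E] [Module ℝ E] [AddCommGroup F] [Module ℝ F]

/-- The positive index of inertia of `Q` is `k`. -/
def HasPosIndex (Q : QuadraticForm ℝ E) (k : ℕ) : Prop :=
  ∃ W U : Submodule ℝ E, IsCompl W U ∧ finrank ℝ W = k ∧
    (∀ x ∈ W, x ≠ 0 → 0 < Q x) ∧ ∀ x ∈ U, Q x ≤ 0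

variable {Q : QuadraticForm ℝ E} {Q' : QuadraticForm ℝ F} {k k' : ℕ}

theorem nonneg_of_forall_ne_zero_pos {W : Submodule ℝ E} (hW : ∀ x ∈ W, x ≠ 0 → 0 < Q x)
    {x : E} (hx : x ∈ W) : 0 ≤ Q x := by
  rcases eq_or_ne x 0 with rfl | hx0
  · rw [map_zero]
  · exact (hW x hx hx0).le

theorem disjoint_of_pos_of_nonpos {W U : Submodule ℝ E} (hW : ∀ x ∈ W, x ≠ 0 → 0 < Q x)
    (hU : ∀ x ∈ U, Q x ≤ 0) : Disjoint W U :=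
  Submodule.disjoint_def.mpr fun x hxW hxU =>
    by_contra fun hx => (hW x hxW hx).not_ge (hU x hxU)

theorem HasPosIndex.le [FiniteDimensional ℝ E] (h : Q.HasPosIndex k) (h' : Q.HasPosIndex k') :
    k ≤ k' := by
  obtain ⟨W, -, -, rfl, hW, -⟩ := h
  obtain ⟨W', U', hWU', rfl, -, hU'⟩ := h'
  have := Submodule.finrank_add_finrank_le_of_disjoint (disjoint_of_pos_of_nonpos hW hU')
  have := Submodule.finrank_add_eq_of_isCompl hWU'
  omega

theorem HasPosIndex.unique [FiniteDimensional ℝ E] (h : Q.HasPosIndex k)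
    (h' : Q.HasPosIndex k') : k = k' :=
  (h.le h').antisymm (h'.le h)

theorem HasPosIndex.comp (h : Q.HasPosIndex k) {f : F →ₗ[ℝ] E} (hf : Function.Surjective f) :
    (Q.comp f).HasPosIndex k := by
  obtain ⟨W, U, hWU, rfl, hW, hU⟩ := h
  obtain ⟨g, hfg⟩ := f.exists_rightInverse_of_surjective (LinearMap.range_eq_top.mpr hf)
  have hfg' : ∀ y, f (g y) = y := LinearMap.congr_fun hfg
  have hg : Function.Injective g := Function.LeftInverse.injective hfg'
  refine ⟨W.map g, U.comap f, ⟨?_, ?_⟩, ?_, ?_, fun x hx => hU (f x) hx⟩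
  · rw [Submodule.disjoint_def]
    rintro _ ⟨y, hy, rfl⟩ hyU
    rw [Submodule.mem_comap, hfg'] at hyU
    rw [Submodule.disjoint_def.mp hWU.disjoint y hy hyU, map_zero]
  · rw [codisjoint_iff, eq_top_iff]
    rintro x -
    obtain ⟨a, ha, b, hb, hab⟩ :=
      Submodule.mem_sup.mp (hWU.sup_eq_top ▸ Submodule.mem_top (x := f x))
    refine Submodule.mem_sup.mpr ⟨g a, ⟨a, ha, rfl⟩, x - g a, ?_, add_sub_cancel _ _⟩
    rwa [Submodule.mem_comap, map_sub, hfg', ← hab, add_sub_cancel_left]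
  · exact (Submodule.equivMapOfInjective g hg W).finrank_eq.symm
  · rintro _ ⟨y, hy, rfl⟩ hy0
    simpa [hfg'] using hW y hy (by rintro rfl; exact hy0 (map_zero g))

theorem HasPosIndex.prod [FiniteDimensional ℝ E] [FiniteDimensional ℝ F] (h : Q.HasPosIndex k)
    (h' : Q'.HasPosIndex k') : (Q.prod Q').HasPosIndex (k + k') := by
  obtain ⟨W, U, hWU, rfl, hW, hU⟩ := h
  obtain ⟨W', U', hWU', rfl, hW', hU'⟩ := h'
  refine ⟨W.prod W', U.prod U', ⟨?_, ?_⟩, Submodule.finrank_prod W W', ?_, ?_⟩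
  · rw [disjoint_iff, Submodule.prod_inf_prod, hWU.inf_eq_bot, hWU'.inf_eq_bot,
      Submodule.prod_bot]
  · rw [codisjoint_iff, Submodule.prod_sup_prod, hWU.sup_eq_top, hWU'.sup_eq_top,
      Submodule.prod_top]
  · rintro ⟨x, x'⟩ ⟨hx, hx'⟩ hxx'
    rw [prod_apply]
    rcases eq_or_ne x 0 with rfl | hx0
    · have hx'0 : x' ≠ 0 := fun h => hxx' (by rw [h]; rfl)
      linarith [hW' x' hx' hx'0, nonneg_of_forall_ne_zero_pos hW hx]
    · linarith [hW x hx hx0, nonneg_of_forall_ne_zero_pos hW' hx']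
  · rintro ⟨x, x'⟩ ⟨hx, hx'⟩
    rw [prod_apply]
    linarith [hU x hx, hU' x' hx']

theorem hasPosIndex_smul_linMulLin_fst_snd {c : ℝ} (hc : c ≠ 0) :
    (c • linMulLin (LinearMap.fst ℝ ℝ ℝ) (LinearMap.snd ℝ ℝ ℝ)).HasPosIndex 1 := by
  have happly : ∀ t s : ℝ,
      (c • linMulLin (LinearMap.fst ℝ ℝ ℝ) (LinearMap.snd ℝ ℝ ℝ)) (t • (1, s)) = c * t ^ 2 * s := by
    intro t s
    simp only [Prod.smul_mk, smul_eq_mul, mul_one, _root_.smul_apply, linMulLin_apply,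
      LinearMap.fst_apply, LinearMap.snd_apply]
    ring
  have hpos : ∀ x ∈ ℝ ∙ ((1 : ℝ), c), x ≠ 0 →
      0 < (c • linMulLin (LinearMap.fst ℝ ℝ ℝ) (LinearMap.snd ℝ ℝ ℝ)) x := by
    rintro _ hx hx0
    obtain ⟨t, rfl⟩ := Submodule.mem_span_singleton.mp hx
    have ht : t ≠ 0 := by rintro rfl; exact hx0 (zero_smul _ _)
    rw [happly, show c * t ^ 2 * c = (c * t) ^ 2 by ring]
    positivity
  have hneg : ∀ x ∈ ℝ ∙ ((1 : ℝ), -c),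
      (c • linMulLin (LinearMap.fst ℝ ℝ ℝ) (LinearMap.snd ℝ ℝ ℝ)) x ≤ 0 := by
    rintro _ hx
    obtain ⟨t, rfl⟩ := Submodule.mem_span_singleton.mp hx
    rw [happly, show c * t ^ 2 * -c = -(c * t) ^ 2 by ring]
    exact neg_nonpos.mpr (sq_nonneg _)
  refine ⟨ℝ ∙ ((1 : ℝ), c), ℝ ∙ ((1 : ℝ), -c), ?_, finrank_span_singleton (by simp), hpos, hneg⟩
  rw [Submodule.isCompl_iff_disjoint _ _ (by simp [finrank_span_singleton])]
  exact disjoint_of_pos_of_nonpos hpos hneg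

variable {ι : Type*} [Fintype ι]

theorem apply_eq_sum_of_isOrthoᵢ (b : Basis ι ℝ E) (hb : (associated Q).IsOrthoᵢ b) (x : E) :
    Q x = ∑ i, Q (b i) * b.repr x i ^ 2 := by
  conv_lhs => rw [← b.sum_repr x]
  rw [← basisRepr_apply, basisRepr_eq_of_iIsOrtho Q b hb, weightedSumSquares_apply]
  simp only [smul_eq_mul, pow_two]

theorem hasPosIndex_of_isOrthoᵢ (b : Basis ι ℝ E) (hb : (associated Q).IsOrthoᵢ b) :
    Q.HasPosIndex #{i | 0 < Q (b i)} := by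
  set s : Set ι := {i | 0 < Q (b i)}
  have hsupp : ∀ {t : Set ι} {x}, x ∈ Submodule.span ℝ (b '' t) → ∀ i ∉ t, b.repr x i = 0 :=
    fun hx i hi => Finsupp.notMem_support_iff.mp fun h => hi (b.mem_span_image.mp hx h)
  have hpos : ∀ x ∈ Submodule.span ℝ (b '' s), x ≠ 0 → 0 < Q x := by
    intro x hx hx0
    rw [apply_eq_sum_of_isOrthoᵢ b hb]
    obtain ⟨i, hi⟩ : ∃ i, b.repr x i ≠ 0 := by
      by_contra! h
      exact hx0 (b.repr.map_eq_zero_iff.mp (Finsupp.ext h))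
    have hterm : ∀ j, 0 ≤ Q (b j) * b.repr x j ^ 2 := fun j => by
      by_cases hj : j ∈ s
      · exact mul_nonneg (le_of_lt hj) (sq_nonneg _)
      · rw [hsupp hx j hj]; simp
    have his : i ∈ s := by_contra fun h => hi (hsupp hx i h)
    exact Finset.sum_pos' (fun j _ => hterm j) ⟨i, Finset.mem_univ i, mul_pos his (by positivity)⟩
  have hneg : ∀ x ∈ Submodule.span ℝ (b '' sᶜ), Q x ≤ 0 := by
    intro x hx
    rw [apply_eq_sum_of_isOrthoᵢ b hb]
    refine Finset.sum_nonpos fun i _ => ?_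
    by_cases hi : i ∈ sᶜ
    · exact mul_nonpos_of_nonpos_of_nonneg (not_lt.mp hi) (sq_nonneg _)
    · rw [hsupp hx i hi]; simp
  refine ⟨Submodule.span ℝ (b '' s), Submodule.span ℝ (b '' sᶜ),
    ⟨disjoint_of_pos_of_nonpos hpos hneg, ?_⟩, ?_, hpos, hneg⟩
  · rw [codisjoint_iff, ← Submodule.span_union, ← Set.image_union, Set.union_compl_self,
      Set.image_univ, b.span_eq]
  · rw [Set.image_eq_range]
    refine (finrank_span_eq_card (b.linearIndependent.comp _ Subtype.val_injective)).trans ?_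
    simp [s, Fintype.card_subtype]

end QuadraticMap

namespace Matrix

section

variable {n : Type*} [Fintype n] [DecidableEq n] {M : Matrix n n ℝ}

theorem toQuadraticForm'_apply (M : Matrix n n ℝ) (x : n → ℝ) :
    M.toQuadraticForm' x = x ⬝ᵥ M *ᵥ x :=
  toLinearMap₂'_apply' M x x

namespace IsHermitian

theorem dotProduct_eigenvectorBasis (hM : M.IsHermitian) (i j : n) :
    ⇑(hM.eigenvectorBasis i) ⬝ᵥ ⇑(hM.eigenvectorBasis j) = if i = j then 1 else 0 := by
  rw [← orthonormal_iff_ite.mp hM.eigenvectorBasis.orthonormal i j,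
    EuclideanSpace.inner_eq_star_dotProduct, star_trivial, dotProduct_comm]

theorem dotProduct_mulVec_eigenvectorBasis (hM : M.IsHermitian) (i j : n) :
    ⇑(hM.eigenvectorBasis i) ⬝ᵥ M *ᵥ ⇑(hM.eigenvectorBasis j) =
      if i = j then hM.eigenvalues i else 0 := by
  rw [hM.mulVec_eigenvectorBasis, dotProduct_smul, dotProduct_eigenvectorBasis, smul_eq_mul]
  split_ifs with h <;> simp [h]

noncomputable def eigenbasis (hM : M.IsHermitian) : Basis n ℝ (n → ℝ) :=
  hM.eigenvectorBasis.toBasis.map (WithLp.linearEquiv 2 ℝ (n → ℝ))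

theorem eigenbasis_apply (hM : M.IsHermitian) (i : n) :
    hM.eigenbasis i = ⇑(hM.eigenvectorBasis i) := by
  simp [eigenbasis]

theorem toQuadraticForm'_eigenbasis (hM : M.IsHermitian) (i : n) :
    M.toQuadraticForm' (hM.eigenbasis i) = hM.eigenvalues i := by
  rw [toQuadraticForm'_apply, eigenbasis_apply, dotProduct_mulVec_eigenvectorBasis, if_pos rfl]

theorem isOrthoᵢ_eigenbasis (hM : M.IsHermitian) :
    (associated M.toQuadraticForm').IsOrthoᵢ hM.eigenbasis := by
  intro i j hij
  change associated _ (hM.eigenbasis i) (hM.eigenbasis j) = 0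
  rw [associated_isOrtho, isOrtho_def]
  simp only [toQuadraticForm'_apply, mulVec_add, add_dotProduct, dotProduct_add, eigenbasis_apply,
    dotProduct_mulVec_eigenvectorBasis, if_neg hij, if_neg (Ne.symm hij)]
  ring

theorem hasPosIndex_toQuadraticForm' (hM : M.IsHermitian) :
    M.toQuadraticForm'.HasPosIndex #{i | 0 < hM.eigenvalues i} := by
  simpa only [toQuadraticForm'_eigenbasis] using hasPosIndex_of_isOrthoᵢ _ hM.isOrthoᵢ_eigenbasis

theorem hasPosIndex_neg_toQuadraticForm' (hM : M.IsHermitian) :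
    (-M.toQuadraticForm').HasPosIndex #{i | hM.eigenvalues i < 0} := by
  have hb : (associated (-M.toQuadraticForm')).IsOrthoᵢ hM.eigenbasis := fun i j hij => by
    change associated _ (hM.eigenbasis i) (hM.eigenbasis j) = 0
    rw [map_neg, LinearMap.neg_apply, LinearMap.neg_apply, hM.isOrthoᵢ_eigenbasis hij, neg_zero]
  simpa only [_root_.neg_apply, toQuadraticForm'_eigenbasis, neg_pos] using
    hasPosIndex_of_isOrthoᵢ _ hb

end IsHermitian

end

variable {V : Type*} [Fintype V]

noncomputable def hubCoords (A : Matrix V V ℝ) (S : Finset V) (w : V) :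
    (V → ℝ) →ₗ[ℝ] (S → ℝ) × ℝ × ℝ :=
  (LinearMap.funLeft ℝ ℝ Subtype.val).prod
    ((LinearMap.proj w).prod (LinearMap.proj w ∘ₗ A.mulVecLin))

variable {A : Matrix V V ℝ} {S : Finset V} {w u : V}

theorem hubCoords_apply (x : V → ℝ) :
    hubCoords A S w x = (fun i : S => x i, x w, (A *ᵥ x) w) := rfl

variable [DecidableEq V]

theorem hubCoords_surjective (hw : w ∉ S) (hu : u ∉ S) (huw : u ≠ w) (hwu : A w u ≠ 0) :
    Function.Surjective (hubCoords A S w) := by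
  rintro ⟨ξ, a, t⟩
  set y : V → ℝ := fun v => if h : v ∈ S then ξ ⟨v, h⟩ else if v = w then a else 0
  refine ⟨y + ((t - (A *ᵥ y) w) / A w u) • Pi.single u 1, ?_⟩
  rw [hubCoords_apply, mulVec_add, mulVec_smul, mulVec_single_one]
  refine Prod.ext (funext fun i => ?_) ?_
  · have hiu : (i : V) ≠ u := fun h => hu (h ▸ i.2)
    simp [y, hiu]
  · simp [y, hw, huw, hwu]

/-- In coordinates: `x ⬝ᵥ A *ᵥ x = x|_S ⬝ᵥ A_S *ᵥ x|_S + 2 * x w * (A *ᵥ x) w`. -/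
theorem toQuadraticForm'_eq_comp_hubCoords (hA : A.IsHermitian) (hw : w ∉ S) (hww : A w w = 0)
    (hsupp : ∀ a b, A a b ≠ 0 → a ∈ S ∧ b ∈ S ∨ a = w ∨ b = w) :
    A.toQuadraticForm' =
      ((A.submatrix Subtype.val Subtype.val : Matrix S S ℝ).toQuadraticForm'.prod
        ((2 : ℝ) • linMulLin (LinearMap.fst ℝ ℝ ℝ) (LinearMap.snd ℝ ℝ ℝ))).comp
        (hubCoords A S w) := by
  have hentry : ∀ a b, A a b = (if a ∈ S ∧ b ∈ S then A a b else 0) +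
      ((if a = w then A a b else 0) + (if b = w then A a b else 0)) := by
    intro a b
    by_cases ha : a = w
    · subst ha
      by_cases hb : b = a <;> simp [hw, hb, hww]
    by_cases hb : b = w
    · subst hb; simp [hw, ha]
    by_cases hab : a ∈ S ∧ b ∈ S
    · simp [hab, ha, hb]
    · have : A a b = 0 := by_contra fun h => by rcases hsupp a b h with h' | h' | h' <;> tauto
      simp [hab, ha, hb, this]
  have hsymm : ∀ a, A a w = A w a := fun a => by simpa using hA.apply w a
  ext x
  have hS : (A.submatrix Subtype.val Subtype.val : Matrix S S ℝ).toQuadraticForm' (fun i => x i) =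
      ∑ a ∈ S, ∑ b ∈ S, x a * (A a b * x b) := by
    simp only [toQuadraticForm'_apply, dotProduct, mulVec, submatrix_apply, Finset.mul_sum]
    rw [← Finset.sum_coe_sort S]
    exact Finset.sum_congr rfl fun a _ => Finset.sum_coe_sort S fun b => x a * (A a b * x b)
  rw [QuadraticMap.comp_apply, hubCoords_apply, QuadraticMap.prod_apply, hS]
  simp only [toQuadraticForm'_apply, dotProduct, mulVec]
  conv_lhs => enter [2, a, 2, 2, b]; rw [hentry]
  simp only [ite_and, add_mul, ite_mul, zero_mul, Finset.sum_add_distrib, Finset.sum_ite_irrel,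
    Finset.sum_ite_mem, Finset.univ_inter, Finset.sum_const_zero, Finset.sum_ite_eq',
    Finset.mem_univ, if_true, hsymm, mul_add, mul_ite, Finset.mul_sum, mul_zero, _root_.smul_apply,
    linMulLin_apply, LinearMap.fst_apply, LinearMap.snd_apply, smul_eq_mul, add_right_inj]
  rw [← Finset.sum_add_distrib]
  exact Finset.sum_congr rfl fun _ _ => by ring

namespace IsHermitian

theorem card_pos_eigenvalues_eq_add_one (hA : A.IsHermitian)
    (hB : (A.submatrix Subtype.val Subtype.val : Matrix S S ℝ).IsHermitian)
    (hw : w ∉ S) (hu : u ∉ S) (huw : u ≠ w) (hwu : A w u ≠ 0) (hww : A w w = 0)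
    (hsupp : ∀ a b, A a b ≠ 0 → a ∈ S ∧ b ∈ S ∨ a = w ∨ b = w) :
    #{i | 0 < hA.eigenvalues i} = #{i | 0 < hB.eigenvalues i} + 1 := by
  refine hA.hasPosIndex_toQuadraticForm'.unique ?_
  rw [toQuadraticForm'_eq_comp_hubCoords hA hw hww hsupp]
  exact (hB.hasPosIndex_toQuadraticForm'.prod (hasPosIndex_smul_linMulLin_fst_snd two_ne_zero)).comp
    (hubCoords_surjective hw hu huw hwu)

theorem card_neg_eigenvalues_eq_add_one (hA : A.IsHermitian)
    (hB : (A.submatrix Subtype.val Subtype.val : Matrix S S ℝ).IsHermitian)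
    (hw : w ∉ S) (hu : u ∉ S) (huw : u ≠ w) (hwu : A w u ≠ 0) (hww : A w w = 0)
    (hsupp : ∀ a b, A a b ≠ 0 → a ∈ S ∧ b ∈ S ∨ a = w ∨ b = w) :
    #{i | hA.eigenvalues i < 0} = #{i | hB.eigenvalues i < 0} + 1 := by
  refine hA.hasPosIndex_neg_toQuadraticForm'.unique ?_
  have hneg : -A.toQuadraticForm' =
      ((-(A.submatrix Subtype.val Subtype.val : Matrix S S ℝ).toQuadraticForm').prod
        ((-2 : ℝ) • linMulLin (LinearMap.fst ℝ ℝ ℝ) (LinearMap.snd ℝ ℝ ℝ))).comp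
        (hubCoords A S w) := by
    rw [toQuadraticForm'_eq_comp_hubCoords hA hw hww hsupp]
    ext x
    simp only [_root_.neg_apply, QuadraticMap.comp_apply, QuadraticMap.prod_apply,
      _root_.smul_apply, linMulLin_apply, LinearMap.fst_apply, LinearMap.snd_apply, smul_eq_mul]
    ring
  rw [hneg]
  exact (hB.hasPosIndex_neg_toQuadraticForm'.prod
    (hasPosIndex_smul_linMulLin_fst_snd (neg_ne_zero.mpr two_ne_zero))).comp
    (hubCoords_surjective hw hu huw hwu)

end IsHermitian

end Matrix

theorem SignedGraph.adjMatrix_ne_zero_iff {V : Type*} (Γ : SignedGraph V) {a b : V} :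
    Γ.adjMatrix a b ≠ 0 ↔ Γ.G.Adj a b := by
  refine ⟨fun h => by_contra fun hab => h (if_neg hab), fun hab => ?_⟩
  rw [adjMatrix, if_pos hab]
  rcases Γ.sign_pm a b hab with h | h <;> rw [h] <;> norm_num

theorem inertia_cycle_join_star_general {V : Type*} [Fintype V] [DecidableEq V] (Γ : SignedGraph V)
    (v₀ : V) (c : Γ.G.Walk v₀ v₀)
    (w : V) (hw : w ∉ c.support)
    (L : Finset V) (hL : L.Nonempty) (hLc : ∀ x ∈ L, x ∉ c.support) (hwL : w ∉ L)
    (y₀ : V)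
    (hE : ∀ a b : V, Γ.G.Adj a b ↔
      (s(a, b) ∈ c.edges ∨ (a = w ∧ b ∈ L) ∨ (b = w ∧ a ∈ L) ∨
        (a = y₀ ∧ b = w) ∨ (a = w ∧ b = y₀))) :
    Γ.negInertia = (Γ.inducedOn c.support.toFinset).negInertia + 1 ∧
      Γ.posInertia = (Γ.inducedOn c.support.toFinset).posInertia + 1 := by
  obtain ⟨u, hu⟩ := hL
  have hwu : Γ.adjMatrix w u ≠ 0 :=
    Γ.adjMatrix_ne_zero_iff.mpr ((hE w u).mpr (Or.inr (Or.inl ⟨rfl, hu⟩)))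
  have hww : Γ.adjMatrix w w = 0 := not_not.mp (mt Γ.adjMatrix_ne_zero_iff.mp (Γ.G.irrefl))
  have hsupp : ∀ a b, Γ.adjMatrix a b ≠ 0 →
      a ∈ c.support.toFinset ∧ b ∈ c.support.toFinset ∨ a = w ∨ b = w := by
    intro a b hab
    rcases (hE a b).mp (Γ.adjMatrix_ne_zero_iff.mp hab) with h | h | h | h | h
    · exact Or.inl ⟨List.mem_toFinset.mpr (c.fst_mem_support_of_mem_edges h),
        List.mem_toFinset.mpr (c.snd_mem_support_of_mem_edges h)⟩
    all_goals tauto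
  have hwS : w ∉ c.support.toFinset := fun h => hw (List.mem_toFinset.mp h)
  have huS : u ∉ c.support.toFinset := fun h => hLc u hu (List.mem_toFinset.mp h)
  have huw : u ≠ w := fun h => hwL (h ▸ hu)
  exact ⟨Γ.isHermitian.card_neg_eigenvalues_eq_add_one (Γ.inducedOn _).isHermitian
      hwS huS huw hwu hww hsupp,
    Γ.isHermitian.card_pos_eigenvalues_eq_add_one (Γ.inducedOn _).isHermitian
      hwS huS huw hwu hww hsupp⟩

/-- joining a vertex of a signed cycle to the center of a star `K_(1,r)`
increases both inertia indices by exactly one. -/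
theorem inertia_cycle_join_star {V : Type*} [Fintype V] [DecidableEq V] (Γ : SignedGraph V) (g : ℕ)
    (v₀ : V) (c : Γ.G.Walk v₀ v₀) (hc : c.IsCycle) (hlen : c.length = g)
    (w : V) (hw : w ∉ c.support)
    (L : Finset V) (hL : L.Nonempty) (hLc : ∀ x ∈ L, x ∉ c.support) (hwL : w ∉ L)
    (y₀ : V) (hy₀ : y₀ ∈ c.support)
    (hcover : ∀ x : V, x ∈ c.support ∨ x = w ∨ x ∈ L)
    (hE : ∀ a b : V, Γ.G.Adj a b ↔
      (s(a, b) ∈ c.edges ∨ (a = w ∧ b ∈ L) ∨ (b = w ∧ a ∈ L) ∨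
        (a = y₀ ∧ b = w) ∨ (a = w ∧ b = y₀))) :
    Γ.negInertia = (Γ.inducedOn c.support.toFinset).negInertia + 1 ∧
      Γ.posInertia = (Γ.inducedOn c.support.toFinset).posInertia + 1 :=
  inertia_cycle_join_star_general Γ v₀ c w hw L hL hLc hwL y₀ hE
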